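/- Consider the Cucker–Smale system of N individuals in ℝ^d: for i = 1,…,N, the trajectories x_i, v_i : ℝ → ℝ^d are differentiable and satisfy x_i'(t) = v_i(t) and v_i'(t) = (1/N) · Σ_{j=1}^N H(‖x_j(t) − x_i(t)‖) (v_j(t) − v_i(t)), where H(r) = K/(ς² + r²)^γ with K, ς > 0 and 0 ≤ γ ≤ 1/2. Define Λ(t) = (1/2) Σ_{i≠j} ‖v_i(t) − v_j(t)‖². Then Λ(t) converges to zero as t → ∞. -/

import Mathlib

/-!
Write `Λ` as the `spread` of the velocities. The communication weights are symmetric, so the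
alignment forces sum to zero and `Λ' = -∑ᵢⱼ Hᵢⱼ ‖vᵢ - vⱼ‖² ≤ 0`. Hence velocity differences stay
bounded by some `c`, relative positions grow at most linearly, `‖xᵢ - xⱼ‖ ≤ D + c t`, and for
`γ ≤ 1/2` this gives `Hᵢⱼ ≥ K / (1 + ς + D + c t)`. So `Λ' ≤ -2K / (1 + ς + D + c t) · Λ`, and as
this rate is not integrable on `[0, ∞)`, Grönwall's argument forces `Λ → 0`.
-/

open Filter Finset Real Set Topology
open scoped RealInnerProductSpace

theorem tendsto_zero_of_hasDerivAt_le_neg_mul {f f' g G : ℝ → ℝ}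
    (hf : ∀ t ≥ 0, HasDerivAt f (f' t) t) (hG : ∀ t ≥ 0, HasDerivAt G (g t) t)
    (hf' : ∀ t ≥ 0, f' t ≤ -(g t * f t)) (hf0 : ∀ t, 0 ≤ f t) (hG_top : Tendsto G atTop atTop) :
    Tendsto f atTop (𝓝 0) := by
  have hψ : ∀ t ≥ 0, HasDerivAt (fun s => f s * exp (G s)) ((f' t + g t * f t) * exp (G t)) t :=
    fun t ht => ((hf t ht).fun_mul (hG t ht).exp).congr_deriv (by ring)
  have hψ_anti : AntitoneOn (fun s => f s * exp (G s)) (Ici 0) := by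
    refine antitoneOn_of_hasDerivWithinAt_nonpos (f' := fun t => (f' t + g t * f t) * exp (G t))
      (convex_Ici 0) (fun t ht => (hψ t ht).continuousAt.continuousWithinAt) ?_ ?_ <;>
      rw [interior_Ici]
    · exact fun t ht => (hψ t ht.le).hasDerivWithinAt
    · exact fun t ht => mul_nonpos_of_nonpos_of_nonneg (by linarith [hf' t ht.le]) (exp_pos _).le
  have hdecay : Tendsto (fun t => f 0 * exp (G 0) * exp (-G t)) atTop (𝓝 0) := by
    simpa using (tendsto_exp_neg_atTop_nhds_zero.comp hG_top).const_mul (f 0 * exp (G 0))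
  refine tendsto_of_tendsto_of_tendsto_of_le_of_le' tendsto_const_nhds hdecay
    (Eventually.of_forall hf0) ?_
  filter_upwards [eventually_ge_atTop 0] with t ht
  rw [exp_neg, ← div_eq_mul_inv, le_div_iff₀ (exp_pos _)]
  exact hψ_anti self_mem_Ici ht ht

theorem tendsto_zero_of_hasDerivAt_le_neg_div {f f' : ℝ → ℝ} {a c p : ℝ} (ha : 0 < a) (hc : 0 < c)
    (hp : 0 < p) (hf : ∀ t ≥ 0, HasDerivAt f (f' t) t)
    (hf' : ∀ t ≥ 0, f' t ≤ -(p / (a + c * t) * f t)) (hf0 : ∀ t, 0 ≤ f t) :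
    Tendsto f atTop (𝓝 0) := by
  refine tendsto_zero_of_hasDerivAt_le_neg_mul (G := fun t => p / c * log (a + c * t)) hf
    (fun t ht => ?_) hf' hf0 ?_
  · have hpos : 0 < a + c * t := by positivity
    have hlog := (((hasDerivAt_id t).const_mul c).const_add a).log hpos.ne'
    exact (hlog.const_mul (p / c)).congr_deriv (by field_simp [hpos.ne']; simp)
  · exact (tendsto_log_atTop.comp (tendsto_atTop_add_const_left _ a
      (tendsto_id.const_mul_atTop hc))).const_mul_atTop (div_pos hp hc)

theorem rpow_le_one_add {b y γ : ℝ} (hb : 0 ≤ b) (hy : 0 ≤ y) (hby : b ≤ y ^ 2) (hγ0 : 0 ≤ γ)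
    (hγ : γ ≤ 1 / 2) : b ^ γ ≤ 1 + y := by
  calc b ^ γ ≤ (y ^ 2) ^ γ := rpow_le_rpow hb hby hγ0
    _ = y ^ (2 * γ) := by rw [← rpow_natCast, ← rpow_mul hy, Nat.cast_ofNat]
    _ ≤ 1 + y := by
      rcases le_total y 1 with hy1 | hy1
      · linarith [rpow_le_one hy hy1 (by linarith : 0 ≤ 2 * γ)]
      · have := rpow_le_rpow_of_exponent_le hy1 (by linarith : 2 * γ ≤ 1)
        rw [rpow_one] at this
        linarith

theorem div_one_add_add_le_div_rpow {K ς γ r R : ℝ} (hK : 0 ≤ K) (hς : 0 < ς) (hr : 0 ≤ r)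
    (hrR : r ≤ R) (hγ0 : 0 ≤ γ) (hγ : γ ≤ 1 / 2) :
    K / (1 + ς + R) ≤ K / (ς ^ 2 + r ^ 2) ^ γ := by
  refine div_le_div_of_nonneg_left hK (by positivity) ?_
  rw [add_assoc]
  exact rpow_le_one_add (by positivity) (by linarith) (by nlinarith) hγ0 hγ

theorem norm_le_norm_add_mul_of_hasDerivAt {E : Type*} [NormedAddCommGroup E] [NormedSpace ℝ E]
    {f f' : ℝ → E} {c t : ℝ} (hf : ∀ s, HasDerivAt f (f' s) s) (hf' : ∀ s ≥ 0, ‖f' s‖ ≤ c)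
    (ht : 0 ≤ t) : ‖f t‖ ≤ ‖f 0‖ + c * t := by
  have := norm_image_sub_le_of_norm_deriv_le_segment' (fun s _ => (hf s).hasDerivWithinAt)
    (fun s hs => hf' s hs.1) t ⟨ht, le_rfl⟩
  rw [sub_zero] at this
  linarith [norm_le_norm_add_norm_sub' (f t) (f 0)]

theorem single_le_sum_sum {ι M : Type*} [Fintype ι] [AddCommMonoid M] [PartialOrder M]
    [IsOrderedAddMonoid M] {f : ι → ι → M} (hf : ∀ i j, 0 ≤ f i j) (i j : ι) :
    f i j ≤ ∑ i, ∑ j, f i j :=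
  (single_le_sum (f := f i) (fun j _ => hf i j) (mem_univ j)).trans
    (single_le_sum (f := fun i => ∑ j, f i j) (fun i _ => sum_nonneg fun j _ => hf i j)
      (mem_univ i))

section Spread

variable {ι E : Type*} [Fintype ι] [NormedAddCommGroup E]

noncomputable def spread (v : ι → E) : ℝ := 1 / 2 * ∑ i, ∑ j, ‖v i - v j‖ ^ 2

theorem spread_nonneg (v : ι → E) : 0 ≤ spread v := by
  unfold spread; positivity

theorem spread_eq_sum_sdiff [DecidableEq ι] (v : ι → E) :
    spread v = 1 / 2 * ∑ i, ∑ j ∈ univ \ {i}, ‖v i - v j‖ ^ 2 := by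
  simp [spread, sdiff_singleton_eq_erase]

theorem norm_sub_le_sqrt_two_mul_spread (v : ι → E) (i j : ι) :
    ‖v i - v j‖ ≤ √(2 * spread v) := by
  refine le_sqrt_of_sq_le ?_
  have := single_le_sum_sum (f := fun i j => ‖v i - v j‖ ^ 2) (fun _ _ => by positivity) i j
  unfold spread
  linarith

theorem two_mul_mul_spread_le {w : ι → ι → ℝ} {g : ℝ} (hg : ∀ i j, g ≤ w i j) (v : ι → E) :
    2 * g * spread v ≤ ∑ i, ∑ j, w i j * ‖v i - v j‖ ^ 2 := by
  calc 2 * g * spread v = ∑ i, ∑ j, g * ‖v i - v j‖ ^ 2 := by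
        simp only [spread, ← mul_sum]; ring
    _ ≤ _ := sum_le_sum fun i _ => sum_le_sum fun j _ => by gcongr; exact hg i j

variable [InnerProductSpace ℝ E]

theorem hasDerivAt_spread {v : ι → ℝ → E} {v' : ι → E} {t : ℝ}
    (hv : ∀ i, HasDerivAt (v i) (v' i) t) :
    HasDerivAt (fun s => spread fun i => v i s) (∑ i, ∑ j, ⟪v i t - v j t, v' i - v' j⟫) t := by
  have h := (HasDerivAt.fun_sum (u := univ) fun i _ => HasDerivAt.fun_sum (u := univ) fun j _ =>
    ((hv i).fun_sub (hv j)).norm_sq).const_mul (1 / 2 : ℝ)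
  refine h.congr_deriv ?_
  simp only [← mul_sum]
  ring

theorem sum_sum_inner_sub_sub (v a : ι → E) (ha : ∑ i, a i = 0) :
    ∑ i, ∑ j, ⟪v i - v j, a i - a j⟫ = 2 * Fintype.card ι * ∑ i, ⟪v i, a i⟫ := by
  simp only [inner_sub_left, inner_sub_right, sum_sub_distrib, sum_const, card_univ, ← inner_sum,
    ← sum_inner, ha, inner_zero_right, nsmul_eq_mul, ← mul_sum]
  ring

noncomputable def alignment (w : ι → ι → ℝ) (v : ι → E) (i : ι) : E :=
  (Fintype.card ι : ℝ)⁻¹ • ∑ j, w i j • (v j - v i)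

variable {w : ι → ι → ℝ}

theorem sum_alignment_eq_zero (hw : ∀ i j, w i j = w j i) (v : ι → E) :
    ∑ i, alignment w v i = 0 := by
  have h : ∑ i, ∑ j, w i j • (v j - v i) = -∑ i, ∑ j, w i j • (v j - v i) := by
    conv_lhs => rw [sum_comm]
    simp only [← sum_neg_distrib, ← smul_neg, neg_sub, hw]
  have : IsAddTorsionFree E := .of_isTorsionFree ℝ E
  simp only [alignment, ← smul_sum, self_eq_neg.mp h, smul_zero]

theorem sum_sum_mul_inner_sub (hw : ∀ i j, w i j = w j i) (v : ι → E) :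
    ∑ i, ∑ j, w i j * ⟪v i, v j - v i⟫ = -(1 / 2) * ∑ i, ∑ j, w i j * ‖v i - v j‖ ^ 2 := by
  have hswap : ∑ i, ∑ j, w i j * ⟪v i, v j - v i⟫ = ∑ i, ∑ j, w i j * ⟪v j, v i - v j⟫ := by
    conv_lhs => rw [sum_comm]
    simp only [hw]
  have hpair : ∀ i j, ⟪v i, v j - v i⟫ + ⟪v j, v i - v j⟫ = -‖v i - v j‖ ^ 2 := fun i j => by
    rw [← real_inner_self_eq_norm_sq]
    simp only [inner_sub_left, inner_sub_right, real_inner_comm (v i) (v j)]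
    ring
  have h : 2 * ∑ i, ∑ j, w i j * ⟪v i, v j - v i⟫ = -∑ i, ∑ j, w i j * ‖v i - v j‖ ^ 2 := by
    rw [two_mul]; nth_rw 2 [hswap]
    simp only [← sum_add_distrib, ← mul_add, hpair, ← sum_neg_distrib, mul_neg]
  linarith

theorem sum_sum_inner_sub_alignment_sub (hw : ∀ i j, w i j = w j i) (v : ι → E) :
    ∑ i, ∑ j, ⟪v i - v j, alignment w v i - alignment w v j⟫
      = -∑ i, ∑ j, w i j * ‖v i - v j‖ ^ 2 := by
  rw [sum_sum_inner_sub_sub v _ (sum_alignment_eq_zero hw v)]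
  simp only [alignment, inner_smul_right, inner_sum, ← mul_sum, sum_sum_mul_inner_sub hw]
  rcases (Fintype.card ι).eq_zero_or_pos with h | h
  · have := Fintype.card_eq_zero_iff.mp h
    simp
  · field_simp

theorem hasDerivAt_spread_of_alignment (hw : ∀ i j, w i j = w j i) {v : ι → ℝ → E} {t : ℝ}
    (hv : ∀ i, HasDerivAt (v i) (alignment w (fun j => v j t) i) t) :
    HasDerivAt (fun s => spread fun i => v i s) (-∑ i, ∑ j, w i j * ‖v i t - v j t‖ ^ 2) t :=
  (hasDerivAt_spread hv).congr_deriv (sum_sum_inner_sub_alignment_sub hw fun i => v i t)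

end Spread

theorem cucker_smale_velocity_spread_tendsto_zero_general
    {d N : ℕ} (K ς γ : ℝ) (hK : 0 < K) (hς : 0 < ς)
    (hγ0 : 0 ≤ γ) (hγ : γ ≤ 1 / 2)
    (x v : Fin N → ℝ → EuclideanSpace ℝ (Fin d))
    (hx : ∀ i t, HasDerivAt (x i) (v i t) t)
    (hv : ∀ i t, HasDerivAt (v i)
      ((N : ℝ)⁻¹ • ∑ j, (K / (ς ^ 2 + ‖x j t - x i t‖ ^ 2) ^ γ) • (v j t - v i t)) t) :
    Filter.Tendsto
      (fun t : ℝ => (1 / 2 : ℝ) * ∑ i, ∑ j ∈ Finset.univ \ {i}, ‖v i t - v j t‖ ^ 2)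
      Filter.atTop (nhds 0) := by
  simp_rw [← spread_eq_sum_sdiff]
  set Λ : ℝ → ℝ := fun t => spread fun i => v i t
  set w : ℝ → Fin N → Fin N → ℝ := fun t i j => K / (ς ^ 2 + ‖x j t - x i t‖ ^ 2) ^ γ
  have hΛ' : ∀ t, HasDerivAt Λ (-∑ i, ∑ j, w t i j * ‖v i t - v j t‖ ^ 2) t := fun t =>
    hasDerivAt_spread_of_alignment (fun i j => by simp only [w, norm_sub_rev])
      fun i => by simpa only [alignment, Fintype.card_fin] using hv i t
  have hΛ_anti : Antitone Λ := antitone_of_hasDerivAt_nonpos hΛ' fun t => by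
    simp only [w, Pi.zero_apply, neg_nonpos]; positivity
  -- Any positive velocity bound will do; positivity is needed for the logarithmic rate.
  set c := √(2 * Λ 0) + 1
  have hvel : ∀ t ≥ 0, ∀ i j, ‖v i t - v j t‖ ≤ c := fun t ht i j =>
    (norm_sub_le_sqrt_two_mul_spread (fun i => v i t) i j).trans
      (by linarith [sqrt_le_sqrt (by linarith [hΛ_anti ht] : 2 * Λ t ≤ 2 * Λ 0)])
  set D := ∑ i, ∑ j, ‖x j 0 - x i 0‖
  have hw : ∀ t ≥ 0, ∀ i j, K / (1 + ς + D + c * t) ≤ w t i j := fun t ht i j => by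
    have hdist := norm_le_norm_add_mul_of_hasDerivAt (fun s => (hx j s).fun_sub (hx i s))
      (fun s hs => hvel s hs j i) ht
    have hD := single_le_sum_sum (f := fun i j => ‖x j 0 - x i 0‖) (fun _ _ => norm_nonneg _) i j
    rw [add_assoc _ D]
    exact div_one_add_add_le_div_rpow hK.le hς (norm_nonneg _) (by linarith) hγ0 hγ
  refine tendsto_zero_of_hasDerivAt_le_neg_div (a := 1 + ς + D) (c := c) (p := 2 * K)
    (by positivity) (by positivity) (by positivity) (fun t _ => hΛ' t) (fun t ht => ?_)
    fun t => spread_nonneg _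
  rw [mul_div_assoc]
  exact neg_le_neg (two_mul_mul_spread_le (hw t ht) _)

/-- Cucker–Smale with `H(r) = K / (ς² + r²)^γ`, `0 ≤ γ ≤ 1/2`: the velocity spread
`Λ(t) = (1/2) ∑_{i≠j} ‖v_i(t) − v_j(t)‖²` converges to zero as `t → ∞`. -/
theorem cucker_smale_velocity_spread_tendsto_zero
    {d N : ℕ} (hN : 1 ≤ N) (K ς γ : ℝ) (hK : 0 < K) (hς : 0 < ς)
    (hγ0 : 0 ≤ γ) (hγ : γ ≤ 1 / 2)
    (x v : Fin N → ℝ → EuclideanSpace ℝ (Fin d))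
    (hx : ∀ i t, HasDerivAt (x i) (v i t) t)
    (hv : ∀ i t, HasDerivAt (v i)
      ((N : ℝ)⁻¹ • ∑ j, (K / (ς ^ 2 + ‖x j t - x i t‖ ^ 2) ^ γ) • (v j t - v i t)) t) :
    Filter.Tendsto
      (fun t : ℝ => (1 / 2 : ℝ) * ∑ i, ∑ j ∈ Finset.univ \ {i}, ‖v i t - v j t‖ ^ 2)
      Filter.atTop (nhds 0) :=
  cucker_smale_velocity_spread_tendsto_zero_general K ς γ hK hς hγ0 hγ x v hx hv
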